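/- Let M ≥ 1, let g be a first-passage density, and let f_T be a hypersymmetric probability density on ℝ^M for the launch times T, with arrivals S = T + D (D having i.i.d. coordinates of density g, independent of T) and sorted arrivals S⃗ = sort(S). Define the differential entropies h(S), h(S⃗), the conditional entropies h(S|T) = ∫ f_T(t) h(S|T=t) dt and h(S⃗|T) = ∫ f_T(t) h(S⃗|T=t) dt, the mutual informations I(S;T) = h(S) − h(S|T) and I(S⃗;T) = h(S⃗) − h(S⃗|T), and the ordering entropy H(Ω|S⃗,T) = ∫ f_T(t) ∫_C F_t(s) H(p_t(·|s)) ds dt. Then, assuming all these quantities are finite, I(S⃗;T) = I(S;T) − (log M! − H(Ω|S⃗,T)). (Paper Theorem 'The mutual information I(S⃗;T) relative to the mutual information I(S;T)'.) -/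

import Mathlib

/-!
Hypersymmetry of `f_T` and the i.i.d. delays make the arrival density `f_S` symmetric, so the
sorted density is `M! f_S` on the chamber `C` and `h(S⃗) = h(S) - log M!`. For fixed `t`, the
grouping identity `F · H(a / F) = F log F - ∑ a log a` (with `F = ∑ a`), integrated over `C`,
turns `H(Ω|S⃗,T=t)` into `h(S|T=t) - h(S⃗|T=t)`, because the `M!` copies of `C` under coordinate
permutations tile `ℝ^M` up to a null set. Averaging over `t` and subtracting gives the identity.
-/

open MeasureTheory Function
open scoped Nat

section PermuteCoordinates

def permCoords {ι α : Type*} [MeasurableSpace α] (σ : Equiv.Perm ι) : (ι → α) ≃ᵐ (ι → α) :=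
  MeasurableEquiv.arrowCongr' σ.symm (MeasurableEquiv.refl α)

@[simp]
theorem permCoords_apply {ι α : Type*} [MeasurableSpace α] (σ : Equiv.Perm ι) (s : ι → α) :
    permCoords σ s = s ∘ σ := rfl

variable {ι α : Type*} [Fintype ι] [MeasureSpace α] [SigmaFinite (volume : Measure α)]

theorem measurePreserving_permCoords (σ : Equiv.Perm ι) :
    MeasurePreserving (permCoords (α := α) σ) :=
  volume_preserving_arrowCongr' _ _ (MeasurePreserving.id volume)

theorem integral_comp_perm {E : Type*} [NormedAddCommGroup E] [NormedSpace ℝ E]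
    (f : (ι → α) → E) (σ : Equiv.Perm ι) : ∫ s, f (s ∘ σ) = ∫ s, f s :=
  (measurePreserving_permCoords σ).integral_comp' f

theorem integrable_comp_perm_iff {E : Type*} [NormedAddCommGroup E]
    {f : (ι → α) → E} (σ : Equiv.Perm ι) : Integrable (fun s => f (s ∘ σ)) ↔ Integrable f :=
  (measurePreserving_permCoords σ).integrable_comp_emb (permCoords σ).measurableEmbedding

theorem integral_mul_comp_perm_of_invariant (f : (ι → α) → ℝ) (k : (ι → α) → (ι → α) → ℝ)
    (hf : ∀ (σ : Equiv.Perm ι) t, f (t ∘ σ) = f t)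
    (hk : ∀ (σ : Equiv.Perm ι) t s, k (t ∘ σ) (s ∘ σ) = k t s) (σ : Equiv.Perm ι)
    (s : ι → α) : ∫ t, f t * k t (s ∘ σ) = ∫ t, f t * k t s := by
  rw [← integral_comp_perm (fun t => f t * k t (s ∘ σ)) σ]
  simp only [hf, hk]

end PermuteCoordinates

theorem volume_setOf_not_injective {ι : Type*} [Fintype ι] :
    volume {s : ι → ℝ | ¬ Injective s} = 0 := by
  classical
  have hsub : {s : ι → ℝ | ¬ Injective s} ⊆
      ⋃ (p : ι × ι) (_ : p.1 ≠ p.2),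
        (LinearMap.ker ((LinearMap.proj p.1 : (ι → ℝ) →ₗ[ℝ] ℝ) - LinearMap.proj p.2) :
          Set (ι → ℝ)) := by
    intro s hs
    simp only [Set.mem_ofPred_eq, Injective, not_forall] at hs
    obtain ⟨i, j, hij, hne⟩ := hs
    simp only [Set.mem_iUnion]
    exact ⟨(i, j), hne, by simp [hij]⟩
  refine measure_mono_null hsub (measure_iUnion_null fun p => measure_iUnion_null fun hp => ?_)
  refine Measure.addHaar_submodule _ _ fun htop => ?_
  have := (Submodule.eq_top_iff'.mp htop) (Pi.single p.1 1)
  simp [hp] at this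

section Chambers

variable {n : ℕ}

theorem measurableSet_setOf_strictMono : MeasurableSet {s : Fin n → ℝ | StrictMono s} := by
  simp only [StrictMono, Set.ofPred_forall]
  exact .iInter fun i => .iInter fun j => .iInter fun _ =>
    measurableSet_lt (measurable_pi_apply i) (measurable_pi_apply j)

def permChamber (σ : Equiv.Perm (Fin n)) : Set (Fin n → ℝ) := {s | StrictMono (s ∘ σ.symm)}

theorem permCoords_preimage_permChamber (σ : Equiv.Perm (Fin n)) :
    permCoords σ ⁻¹' permChamber σ = {s | StrictMono s} := by
  ext s
  simp [permChamber, comp_assoc]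

theorem measurableSet_permChamber (σ : Equiv.Perm (Fin n)) : MeasurableSet (permChamber σ) :=
  (permCoords σ.symm).measurable measurableSet_setOf_strictMono

theorem pairwise_disjoint_permChamber : Pairwise (Disjoint on permChamber (n := n)) := by
  intro σ τ hne
  refine Set.disjoint_left.2 fun s (hσ : StrictMono _) (hτ : StrictMono _) => hne ?_
  have hrange : Set.range (s ∘ σ.symm) = Set.range (s ∘ τ.symm) := by
    simp only [Set.range_comp, Equiv.range_eq_univ]
  have hs : Injective s := by
    simpa using hσ.injective.comp σ.injective
  have heq := (hσ.range_inj hτ).1 hrange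
  exact Equiv.symm_bijective.injective (DFunLike.coe_injective (hs.comp_left heq))

theorem ae_mem_iUnion_permChamber : ∀ᵐ s : Fin n → ℝ, s ∈ ⋃ σ, permChamber σ := by
  refine ae_iff.2 (measure_mono_null (fun s hs => ?_) volume_setOf_not_injective)
  refine fun hinj => hs ?_
  refine Set.mem_iUnion.2 ⟨(Tuple.sort s).symm, ?_⟩
  simpa [permChamber] using
    (Tuple.monotone_sort s).strictMono_of_injective (hinj.comp (Tuple.sort s).injective)

theorem sum_setIntegral_strictMono_comp_perm {E : Type*} [NormedAddCommGroup E]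
    [NormedSpace ℝ E] {f : (Fin n → ℝ) → E} (hf : Integrable f) :
    ∑ σ : Equiv.Perm (Fin n), ∫ s in {s | StrictMono s}, f (s ∘ σ) = ∫ s, f s := by
  have hpre (σ : Equiv.Perm (Fin n)) :
      ∫ s in {s | StrictMono s}, f (s ∘ σ) = ∫ s in permChamber σ, f s := by
    rw [← permCoords_preimage_permChamber σ]
    exact (measurePreserving_permCoords σ).setIntegral_preimage_emb
      (permCoords σ).measurableEmbedding f _
  rw [Finset.sum_congr rfl fun σ _ => hpre σ,
    ← integral_iUnion_fintype measurableSet_permChamber pairwise_disjoint_permChamber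
      fun σ => hf.integrableOn,
    Measure.restrict_eq_self_of_ae_mem ae_mem_iUnion_permChamber]

theorem factorial_mul_setIntegral_strictMono_of_symm {f : (Fin n → ℝ) → ℝ}
    (hf : Integrable f) (hsymm : ∀ (σ : Equiv.Perm (Fin n)) s, f (s ∘ σ) = f s) :
    (n ! : ℝ) * ∫ s in {s | StrictMono s}, f s = ∫ s, f s := by
  simp [← sum_setIntegral_strictMono_comp_perm hf, hsymm, Fintype.card_perm]

end Chambers

theorem sum_mul_neg_sum_div_mul_log_div {ι : Type*} [Fintype ι] {a : ι → ℝ}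
    (ha : ∀ i, 0 ≤ a i) :
    (∑ i, a i) * -∑ i, a i / (∑ j, a j) * Real.log (a i / ∑ j, a j)
      = (∑ i, a i) * Real.log (∑ i, a i) - ∑ i, a i * Real.log (a i) := by
  set S := ∑ j, a j
  by_cases hS0 : S = 0
  · have hzero : ∀ i, a i = 0 := fun i =>
      (Finset.sum_eq_zero_iff_of_nonneg fun i _ => ha i).1 hS0 i (Finset.mem_univ i)
    simp [hS0, hzero]
  have hterm (i : ι) :
      S * (a i / S * Real.log (a i / S)) = a i * Real.log (a i) - a i * Real.log S := by
    by_cases hai : a i = 0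
    · simp [hai]
    rw [← mul_assoc, mul_div_cancel₀ _ hS0, Real.log_div hai hS0]
    ring
  rw [mul_neg, Finset.mul_sum, Finset.sum_congr rfl fun i _ => hterm i, Finset.sum_sub_distrib,
    ← Finset.sum_mul]
  ring

section SortedDensity

variable {n : ℕ}

def sortedDensity (q : (Fin n → ℝ) → ℝ) (s : Fin n → ℝ) : ℝ :=
  ∑ σ : Equiv.Perm (Fin n), q (s ∘ σ)

noncomputable def orderingEntropy (q : (Fin n → ℝ) → ℝ) (s : Fin n → ℝ) : ℝ :=
  -∑ σ : Equiv.Perm (Fin n),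
    q (s ∘ σ) / sortedDensity q s * Real.log (q (s ∘ σ) / sortedDensity q s)

theorem sortedDensity_eq_of_symm {q : (Fin n → ℝ) → ℝ}
    (hsymm : ∀ (σ : Equiv.Perm (Fin n)) s, q (s ∘ σ) = q s) (s : Fin n → ℝ) :
    sortedDensity q s = n ! * q s := by
  simp [sortedDensity, hsymm, Fintype.card_perm]

theorem setIntegral_sortedDensity_mul_log_of_symm {p : (Fin n → ℝ) → ℝ} (hp : Integrable p)
    (hp1 : ∫ s, p s = 1) (hplog : Integrable fun s => p s * Real.log (p s))
    (hsymm : ∀ (σ : Equiv.Perm (Fin n)) s, p (s ∘ σ) = p s) :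
    ∫ s in {s | StrictMono s}, sortedDensity p s * Real.log (sortedDensity p s)
      = (∫ s, p s * Real.log (p s)) + Real.log n ! := by
  have hpt (s : Fin n → ℝ) : sortedDensity p s * Real.log (sortedDensity p s)
      = n ! * (p s * Real.log (p s)) + Real.log n ! * (n ! * p s) := by
    have := Real.negMulLog_mul (n ! : ℝ) (p s)
    simp only [Real.negMulLog] at this
    rw [sortedDensity_eq_of_symm hsymm]
    linarith
  have hmass := factorial_mul_setIntegral_strictMono_of_symm hp hsymm
  have hent := factorial_mul_setIntegral_strictMono_of_symm hplog fun σ s => by rw [hsymm]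
  simp only [hpt]
  rw [integral_add (hplog.integrableOn.const_mul _) ((hp.integrableOn.const_mul _).const_mul _),
    integral_const_mul, integral_const_mul, integral_const_mul, hmass, hent, hp1, mul_one]

theorem sortedDensity_mul_orderingEntropy {q : (Fin n → ℝ) → ℝ} (hq : ∀ s, 0 ≤ q s)
    (s : Fin n → ℝ) :
    sortedDensity q s * orderingEntropy q s
      = sortedDensity q s * Real.log (sortedDensity q s)
        - ∑ σ : Equiv.Perm (Fin n), q (s ∘ σ) * Real.log (q (s ∘ σ)) :=
  sum_mul_neg_sum_div_mul_log_div fun σ => hq (s ∘ σ)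

theorem setIntegral_sortedDensity_mul_orderingEntropy {q : (Fin n → ℝ) → ℝ} (hq : ∀ s, 0 ≤ q s)
    (hqlog : Integrable fun s => q s * Real.log (q s))
    (hFlog : IntegrableOn (fun s => sortedDensity q s * Real.log (sortedDensity q s))
      {s | StrictMono s}) :
    ∫ s in {s | StrictMono s}, sortedDensity q s * orderingEntropy q s
      = (∫ s in {s | StrictMono s}, sortedDensity q s * Real.log (sortedDensity q s))
        - ∫ s, q s * Real.log (q s) := by
  have hperm (σ : Equiv.Perm (Fin n)) :
      Integrable fun s => q (s ∘ σ) * Real.log (q (s ∘ σ)) :=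
    (integrable_comp_perm_iff σ).2 hqlog
  simp only [sortedDensity_mul_orderingEntropy hq]
  rw [integral_sub hFlog (integrable_finsetSum _ fun σ _ => (hperm σ).integrableOn),
    integral_finsetSum _ fun σ _ => (hperm σ).integrableOn,
    sum_setIntegral_strictMono_comp_perm hqlog]

end SortedDensity

theorem integral_prod_comp_sub {ι : Type*} [Fintype ι] (g : ℝ → ℝ) (t : ι → ℝ) :
    ∫ s : ι → ℝ, ∏ m, g (s m - t m) = (∫ x, g x) ^ Fintype.card ι := by
  simp [integral_fintype_prod_volume_eq_prod (fun m x => g (x - t m)),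
    integral_sub_right_eq_self]

section Mixture

variable {α β : Type*} [MeasurableSpace α] [MeasurableSpace β] {μ : Measure α} {ν : Measure β}
  [SFinite ν] {f : α → ℝ} {k : α → β → ℝ}

theorem integrable_prod_mul_of_integral_eq_one (hf : Integrable f μ) (hfm : Measurable f)
    (hf0 : ∀ t, 0 ≤ f t) (hkm : Measurable (uncurry k)) (hk0 : ∀ t s, 0 ≤ k t s)
    (hk1 : ∀ t, ∫ s, k t s ∂ν = 1) :
    Integrable (fun p : α × β => f p.1 * k p.1 p.2) (μ.prod ν) := by
  have hm : Measurable fun p : α × β => f p.1 * k p.1 p.2 := (hfm.comp measurable_fst).mul hkm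
  refine (integrable_prod_iff hm.aestronglyMeasurable).2
    ⟨.of_forall fun t => (integrable_of_integral_eq_one (hk1 t)).const_mul (f t), ?_⟩
  have hnorm (t : α) : ∫ s, ‖f t * k t s‖ ∂ν = f t := by
    simp_rw [Real.norm_of_nonneg (mul_nonneg (hf0 t) (hk0 t _)), integral_const_mul, hk1,
      mul_one]
  simpa only [hnorm] using hf

theorem integral_integral_mul_of_integral_eq_one [SFinite μ] (hf : Integrable f μ)
    (hfm : Measurable f) (hf0 : ∀ t, 0 ≤ f t) (hkm : Measurable (uncurry k))
    (hk0 : ∀ t s, 0 ≤ k t s) (hk1 : ∀ t, ∫ s, k t s ∂ν = 1) :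
    ∫ s, ∫ t, f t * k t s ∂μ ∂ν = ∫ t, f t ∂μ := by
  rw [← integral_integral_swap (integrable_prod_mul_of_integral_eq_one hf hfm hf0 hkm hk0 hk1)]
  simp_rw [integral_const_mul, hk1, mul_one]

end Mixture

theorem mutual_information_ordered_vs_unordered_general {M : ℕ}
    (g : ℝ → ℝ) (hgmeas : Measurable g) (hg0 : ∀ x, 0 ≤ g x)
    (hgdens : ∫ x, g x = 1)
    (fT : (Fin M → ℝ) → ℝ) (hfTmeas : Measurable fT) (hfT0 : ∀ t, 0 ≤ fT t)
    (hfT1 : ∫ t, fT t = 1)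
    (hsymm : ∀ (π : Equiv.Perm (Fin M)) (x : Fin M → ℝ), fT (x ∘ π) = fT x)
    (fc : (Fin M → ℝ) → (Fin M → ℝ) → ℝ)
    (hfc : ∀ t s, fc t s = ∏ m, g (s m - t m))
    (Fc : (Fin M → ℝ) → (Fin M → ℝ) → ℝ)
    (hFc : ∀ t s, Fc t s = ∑ π : Equiv.Perm (Fin M), fc t (s ∘ π))
    (Hp : (Fin M → ℝ) → (Fin M → ℝ) → ℝ)
    (hHp : ∀ t s, Hp t s = -∑ π : Equiv.Perm (Fin M),
        (fc t (s ∘ π) / Fc t s) * Real.log (fc t (s ∘ π) / Fc t s))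
    (fS : (Fin M → ℝ) → ℝ) (hfS : ∀ s, fS s = ∫ t, fT t * fc t s)
    (FS : (Fin M → ℝ) → ℝ) (hFS : ∀ s, FS s = ∑ π : Equiv.Perm (Fin M), fS (s ∘ π))
    (C : Set (Fin M → ℝ)) (hC : C = {s : Fin M → ℝ | StrictMono s})
    (hS hSvec hScondT hSveccondT HOrd : ℝ)
    (hhS : hS = -(∫ s, fS s * Real.log (fS s)))
    (hhSvec : hSvec = -(∫ s in C, FS s * Real.log (FS s)))
    (hhScondT : hScondT = ∫ t, fT t * -(∫ s, fc t s * Real.log (fc t s)))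
    (hhSveccondT : hSveccondT = ∫ t, fT t * -(∫ s in C, Fc t s * Real.log (Fc t s)))
    (hHOrd : HOrd = ∫ t, fT t * ∫ s in C, Fc t s * Hp t s)
    -- finiteness of all the above quantities:
    (i1 : Integrable (fun s => fS s * Real.log (fS s)))
    (i3 : ∀ t, Integrable (fun s => fc t s * Real.log (fc t s)))
    (i4 : ∀ t, IntegrableOn (fun s => Fc t s * Real.log (Fc t s)) C)
    (i6 : Integrable (fun t => fT t * -(∫ s, fc t s * Real.log (fc t s))))
    (i8 : Integrable (fun t => fT t * ∫ s in C, Fc t s * Hp t s)) :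
    hSvec - hSveccondT
      = (hS - hScondT) - (Real.log (Nat.factorial M : ℝ) - HOrd) := by
  subst hC
  obtain rfl : Fc = fun t => sortedDensity (fc t) := funext₂ hFc
  obtain rfl : FS = sortedDensity fS := funext hFS
  obtain rfl : Hp = fun t => orderingEntropy (fc t) := funext₂ hHp
  have hfc0 (t s : Fin M → ℝ) : 0 ≤ fc t s := hfc t s ▸ Finset.prod_nonneg fun m _ => hg0 _
  have hfc1 (t : Fin M → ℝ) : ∫ s, fc t s = 1 := by
    simp_rw [hfc, integral_prod_comp_sub, hgdens, one_pow]
  have hfcm : Measurable (uncurry fc) := by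
    rw [show uncurry fc = fun p => ∏ m, g (p.2 m - p.1 m) from funext fun p => hfc _ _]
    fun_prop
  have hfcsymm (σ : Equiv.Perm (Fin M)) (t s : Fin M → ℝ) : fc (t ∘ σ) (s ∘ σ) = fc t s := by
    simpa only [hfc, comp_apply] using Equiv.prod_comp σ fun m => g (s m - t m)
  have hfTint := integrable_of_integral_eq_one hfT1
  obtain rfl : fS = fun s => ∫ t, fT t * fc t s := funext hfS
  have hfSint := (integrable_prod_mul_of_integral_eq_one hfTint hfTmeas hfT0 hfcm hfc0
    hfc1).integral_prod_right
  have hfS1 : ∫ s, ∫ t, fT t * fc t s = 1 := by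
    rw [integral_integral_mul_of_integral_eq_one hfTint hfTmeas hfT0 hfcm hfc0 hfc1, hfT1]
  have hfSsymm := integral_mul_comp_perm_of_invariant fT fc hsymm hfcsymm
  have hvec : hSvec = hS - Real.log M ! := by
    rw [hhSvec, hhS, setIntegral_sortedDensity_mul_log_of_symm hfSint hfS1 i1 hfSsymm]
    ring
  have hcond : hSveccondT = hScondT - HOrd := by
    rw [hhSveccondT, hhScondT, hHOrd, ← integral_sub i6 i8]
    congr 1 with t
    rw [setIntegral_sortedDensity_mul_orderingEntropy (hfc0 t) (i3 t) (i4 t)]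
    ring
  rw [hvec, hcond]
  ring

/-- **`I(S⃗;T) = I(S;T) − (log M! − H(Ω|S⃗,T))`.**  For a causal first-passage density
`g` and a hypersymmetric launch density `f_T` on `ℝ^M`, with conditional arrival
density `fc t s = ∏_m g(s_m − t_m)`, sorted-arrival conditional density
`Fc t s = ∑_π fc t (s∘π)` on the ordered chamber `C`, conditional permutation entropy
`Hp`, marginal arrival density `fS`, sorted marginal density `FS`, and the entropies
`h(S), h(S⃗), h(S|T), h(S⃗|T)` and ordering entropy `H(Ω|S⃗,T)` defined by the
corresponding integrals (all assumed finite), the mutual informations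
`I(S;T) = h(S)−h(S|T)` and `I(S⃗;T) = h(S⃗)−h(S⃗|T)` satisfy
`I(S⃗;T) = I(S;T) − (log M! − H(Ω|S⃗,T))`. -/
theorem mutual_information_ordered_vs_unordered {M : ℕ} (hM : 1 ≤ M)
    (g : ℝ → ℝ) (hgmeas : Measurable g) (hg0 : ∀ x, 0 ≤ g x)
    (hgcausal : ∀ x < (0 : ℝ), g x = 0) (hgdens : ∫ x, g x = 1)
    (fT : (Fin M → ℝ) → ℝ) (hfTmeas : Measurable fT) (hfT0 : ∀ t, 0 ≤ fT t)
    (hfT1 : ∫ t, fT t = 1)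
    (hsymm : ∀ (π : Equiv.Perm (Fin M)) (x : Fin M → ℝ), fT (x ∘ π) = fT x)
    (fc : (Fin M → ℝ) → (Fin M → ℝ) → ℝ)
    (hfc : ∀ t s, fc t s = ∏ m, g (s m - t m))
    (Fc : (Fin M → ℝ) → (Fin M → ℝ) → ℝ)
    (hFc : ∀ t s, Fc t s = ∑ π : Equiv.Perm (Fin M), fc t (s ∘ π))
    (Hp : (Fin M → ℝ) → (Fin M → ℝ) → ℝ)
    (hHp : ∀ t s, Hp t s = -∑ π : Equiv.Perm (Fin M),
        (fc t (s ∘ π) / Fc t s) * Real.log (fc t (s ∘ π) / Fc t s))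
    (fS : (Fin M → ℝ) → ℝ) (hfS : ∀ s, fS s = ∫ t, fT t * fc t s)
    (FS : (Fin M → ℝ) → ℝ) (hFS : ∀ s, FS s = ∑ π : Equiv.Perm (Fin M), fS (s ∘ π))
    (C : Set (Fin M → ℝ)) (hC : C = {s : Fin M → ℝ | StrictMono s})
    (hS hSvec hScondT hSveccondT HOrd : ℝ)
    (hhS : hS = -(∫ s, fS s * Real.log (fS s)))
    (hhSvec : hSvec = -(∫ s in C, FS s * Real.log (FS s)))
    (hhScondT : hScondT = ∫ t, fT t * -(∫ s, fc t s * Real.log (fc t s)))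
    (hhSveccondT : hSveccondT = ∫ t, fT t * -(∫ s in C, Fc t s * Real.log (Fc t s)))
    (hHOrd : HOrd = ∫ t, fT t * ∫ s in C, Fc t s * Hp t s)
    -- finiteness of all the above quantities:
    (i1 : Integrable (fun s => fS s * Real.log (fS s)))
    (i2 : IntegrableOn (fun s => FS s * Real.log (FS s)) C)
    (i3 : ∀ t, Integrable (fun s => fc t s * Real.log (fc t s)))
    (i4 : ∀ t, IntegrableOn (fun s => Fc t s * Real.log (Fc t s)) C)
    (i5 : ∀ t, IntegrableOn (fun s => Fc t s * Hp t s) C)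
    (i6 : Integrable (fun t => fT t * -(∫ s, fc t s * Real.log (fc t s))))
    (i7 : Integrable (fun t => fT t * -(∫ s in C, Fc t s * Real.log (Fc t s))))
    (i8 : Integrable (fun t => fT t * ∫ s in C, Fc t s * Hp t s)) :
    hSvec - hSveccondT
      = (hS - hScondT) - (Real.log (Nat.factorial M : ℝ) - HOrd) :=
  mutual_information_ordered_vs_unordered_general g hgmeas hg0 hgdens fT hfTmeas hfT0 hfT1 hsymm fc
    hfc Fc hFc Hp hHp fS hfS FS hFS C hC hS hSvec hScondT hSveccondT HOrd hhS hhSvec hhScondT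
    hhSveccondT hHOrd i1 i3 i4 i6 i8
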